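/- arXiv:2406.08104 — 2 statements merged into one kernel-verified Lean document; each statement's English description precedes it below -/
import Mathlib

section
/- The preemptive resource leveling problem L | r_i, d_i, c_i = 1, pmtn | F with integer data admits an optimal solution with integer amounts x_{ik} of each job i processed in each elementary interval [τ_{k−1}, τ_k] defined by the release and due dates; consequently L | r_i, d_i, p_i = 1, c_i = 1 | F (non-preemptive, unit times) is solvable via the same linear program. -/
open Finset

def LPFeasible {ι : Type*} [Fintype ι] (K : ℕ) (p r d : ι → ℕ) (L : ℕ)
    (τ : Fin (K + 1) → ℕ)
    (x : ι → Fin K → ℝ) (y z : Fin K → ℝ) : Prop :=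
  (∀ i, ∑ k ∈ univ.filter (fun k : Fin K => r i ≤ τ k.castSucc ∧ τ k.succ ≤ d i),
      x i k = p i) ∧
  (∀ i k, ¬(r i ≤ τ k.castSucc ∧ τ k.succ ≤ d i) → x i k = 0) ∧
  (∀ k : Fin K, y k + z k =
    ∑ i ∈ univ.filter (fun i => r i ≤ τ k.castSucc ∧ τ k.succ ≤ d i), x i k) ∧
  (∀ i k, 0 ≤ x i k ∧ x i k ≤ ((τ k.succ - τ k.castSucc : ℕ) : ℝ)) ∧
  (∀ k, 0 ≤ y k ∧ y k ≤ (L : ℝ) * ((τ k.succ - τ k.castSucc : ℕ) : ℝ)) ∧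
  (∀ k, 0 ≤ z k)

namespace Stmt18Aux

/-- a real is an integer -/
def IsInt (a : ℝ) : Prop := ∃ m : ℤ, a = m

lemma IsInt.sub {a b : ℝ} (ha : IsInt a) (hb : IsInt b) : IsInt (a - b) := by
  obtain ⟨m, rfl⟩ := ha; obtain ⟨n, rfl⟩ := hb; exact ⟨m - n, by push_cast; ring⟩

lemma IsInt.add {a b : ℝ} (ha : IsInt a) (hb : IsInt b) : IsInt (a + b) := by
  obtain ⟨m, rfl⟩ := ha; obtain ⟨n, rfl⟩ := hb; exact ⟨m + n, by push_cast; ring⟩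

lemma isInt_zero : IsInt 0 := ⟨0, by norm_num⟩

lemma isInt_natCast (n : ℕ) : IsInt n := ⟨n, by push_cast; ring⟩

lemma isInt_sum {α : Type*} (s : Finset α) (f : α → ℝ) (h : ∀ a ∈ s, IsInt (f a)) :
    IsInt (∑ a ∈ s, f a) := by
  classical
  induction s using Finset.induction with
  | empty => simpa using isInt_zero
  | @insert a s hns ih =>
    rw [Finset.sum_insert hns]
    exact (h a (mem_insert_self a s)).add (ih fun b hb => h b (mem_insert_of_mem hb))

lemma isInt_of_erase {α : Type*} [DecidableEq α] (s : Finset α) (f : α → ℝ) (a : α)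
    (ha : a ∈ s) (hsum : IsInt (∑ b ∈ s, f b)) (h : ∀ b ∈ s, b ≠ a → IsInt (f b)) :
    IsInt (f a) := by
  have h1 : f a = (∑ b ∈ s, f b) - (∑ b ∈ s.erase a, f b) := by
    rw [← Finset.sum_erase_add s f ha]; ring
  rw [h1]
  exact hsum.sub (isInt_sum _ _ fun b hb =>
    h b (Finset.mem_of_mem_erase hb) (Finset.ne_of_mem_erase hb))

section
variable {ι : Type*} [Fintype ι] [DecidableEq ι] {K : ℕ} (p r d : ι → ℕ) (L : ℕ)
  (τ : Fin (K + 1) → ℕ)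

/-- bundled variable index type -/
abbrev Vt (ι : Type*) (K : ℕ) := (ι × Fin K) ⊕ (Fin K ⊕ Fin K)

/-- intervals in the window of job `i` -/
def Ks (i : ι) : Finset (Fin K) :=
  univ.filter (fun k : Fin K => r i ≤ τ k.castSucc ∧ τ k.succ ≤ d i)

/-- jobs whose window contains interval `k` -/
def Is (k : Fin K) : Finset ι :=
  univ.filter (fun i => r i ≤ τ k.castSucc ∧ τ k.succ ≤ d i)

def Feas (v : Vt ι K → ℝ) : Prop :=
  LPFeasible K p r d L τ (fun i k => v (.inl (i, k))) (fun k => v (.inr (.inl k)))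
    (fun k => v (.inr (.inr k)))

noncomputable def fracs (v : Vt ι K → ℝ) : Finset (Vt ι K) :=
  @Finset.filter _ (fun c => ¬ IsInt (v c)) (fun _ => Classical.propDecidable _) univ

lemma mem_fracs {v : Vt ι K → ℝ} {c : Vt ι K} : c ∈ fracs v ↔ ¬ IsInt (v c) := by
  simp [fracs]

/-- column of the constraint matrix corresponding to variable `c` -/
def col (c : Vt ι K) : (ι ⊕ Fin K) → ℝ :=
  Sum.elim
    (fun ik rr => if r ik.1 ≤ τ ik.2.castSucc ∧ τ ik.2.succ ≤ d ik.1 then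
        (if rr = Sum.inl ik.1 then 1 else if rr = Sum.inr ik.2 then -1 else 0) else 0)
    (Sum.elim (fun k rr => if rr = Sum.inr k then 1 else 0)
      (fun k rr => if rr = Sum.inr k then 1 else 0)) c

lemma col_at_job (i : ι) (c : Vt ι K) :
    col r d τ c (Sum.inl i) =
      if c ∈ (Ks r d τ i).image (fun k => (Sum.inl (i, k) : Vt ι K)) then 1 else 0 := by
  rcases c with ⟨i', k⟩ | (k | k) <;>
    simp only [col, Sum.elim_inl, Sum.elim_inr, Finset.mem_image, Ks, Finset.mem_filter,
      Finset.mem_univ, true_and, Sum.inl.injEq, Prod.mk.injEq, reduceCtorEq, if_false]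
  · by_cases hii : i = i'
    · subst hii
      by_cases hw : r i ≤ τ k.castSucc ∧ τ k.succ ≤ d i
      · rw [if_pos hw, if_pos rfl, if_pos ⟨k, hw, rfl, rfl⟩]
      · rw [if_neg hw, if_neg]
        rintro ⟨a, ha, -, rfl⟩
        exact hw ha
    · simp [hii]
  · simp
  · simp

lemma col_at_int (k : Fin K) (c : Vt ι K) :
    col r d τ c (Sum.inr k) =
      (if c = Sum.inr (Sum.inl k) then 1 else 0) + (if c = Sum.inr (Sum.inr k) then 1 else 0)
        - (if c ∈ (Is r d τ k).image (fun i => (Sum.inl (i, k) : Vt ι K)) then 1 else 0) := by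
  rcases c with ⟨i', k'⟩ | (k' | k') <;>
    simp only [col, Sum.elim_inl, Sum.elim_inr, Finset.mem_image, Is, Finset.mem_filter,
      Finset.mem_univ, true_and, Sum.inr.injEq, Sum.inl.injEq, Prod.mk.injEq, reduceCtorEq,
      if_false]
  · by_cases hkk : k = k'
    · subst hkk
      by_cases hw : r i' ≤ τ k.castSucc ∧ τ k.succ ≤ d i'
      · rw [if_pos hw, if_pos rfl, if_pos ⟨i', hw, rfl, rfl⟩]; norm_num
      · rw [if_neg hw, if_neg]
        · norm_num
        · rintro ⟨a, ha, rfl, -⟩; exact hw ha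
    · have : ¬∃ a, (r a ≤ τ k.castSucc ∧ τ k.succ ≤ d a) ∧ a = i' ∧ k = k' := by
        rintro ⟨a, -, -, h⟩; exact hkk h
      rw [if_neg this, if_neg hkk]
      norm_num
  · by_cases hkk : k = k' <;> simp [hkk, eq_comm]
  · by_cases hkk : k = k' <;> simp [hkk, eq_comm]

lemma col_sum_x (i : ι) (k : Fin K) (hw : r i ≤ τ k.castSucc ∧ τ k.succ ≤ d i) :
    ∑ rr : ι ⊕ Fin K, col r d τ (Sum.inl (i, k)) rr = 0 := by
  rw [Fintype.sum_sum_type]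
  simp only [col, Sum.elim_inl, if_pos hw, Sum.inl.injEq, Sum.inr.injEq, reduceCtorEq,
    if_false]
  rw [Finset.sum_ite_eq' univ i (fun _ => (1:ℝ)), Finset.sum_ite_eq' univ k (fun _ => (-1:ℝ))]
  simp

lemma exists_kernel (p : ι → ℕ) (v : Vt ι K → ℝ) (hf : Feas p r d L τ v)
    (hne : (fracs v).Nonempty) :
    ∃ σ : Vt ι K → ℝ,
      (∀ c, σ c ≠ 0 → ¬ IsInt (v c)) ∧ (∃ c, σ c ≠ 0) ∧
      (∀ i, ∑ k ∈ Ks r d τ i, σ (Sum.inl (i, k)) = 0) ∧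
      (∀ k, σ (Sum.inr (Sum.inl k)) + σ (Sum.inr (Sum.inr k)) =
        ∑ i ∈ Is r d τ k, σ (Sum.inl (i, k))) := by
  classical
  obtain ⟨hsum, hwin0, hbal, hxb, hyb, hzb⟩ := hf
  set C : Finset (Vt ι K) := fracs v with hC
  have hxwin : ∀ i k, (Sum.inl (i, k) : Vt ι K) ∈ C →
      (r i ≤ τ k.castSucc ∧ τ k.succ ≤ d i) := by
    intro i k hc
    by_contra hw
    exact (mem_fracs.1 hc) (show IsInt (v (Sum.inl (i,k))) from
      (show v (Sum.inl (i,k)) = 0 from hwin0 i k hw) ▸ isInt_zero)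
  set T : Finset (ι ⊕ Fin K) :=
    univ.filter (fun rr => ∃ c ∈ C, col r d τ c rr ≠ 0) with hT
  have mem_T : ∀ rr, rr ∈ T ↔ ∃ c ∈ C, col r d τ c rr ≠ 0 := by
    intro rr; simp [hT]
  have hsupp : ∀ c ∈ C, ∀ rr, col r d τ c rr ≠ 0 → rr ∈ T := by
    intro c hc rr h; exact (mem_T rr).2 ⟨c, hc, h⟩
  -- two fractional variables in every touched row
  have hKs : ∀ i k, k ∈ Ks r d τ i ↔ (r i ≤ τ k.castSucc ∧ τ k.succ ≤ d i) := by
    intro i k; simp [Ks]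
  have hIs : ∀ i k, i ∈ Is r d τ k ↔ (r i ≤ τ k.castSucc ∧ τ k.succ ≤ d i) := by
    intro i k; simp [Is]
  have colx : ∀ (i : ι) (k : Fin K), (r i ≤ τ k.castSucc ∧ τ k.succ ≤ d i) →
      col r d τ (Sum.inl (i,k)) (Sum.inl i) = 1 ∧
      col r d τ (Sum.inl (i,k)) (Sum.inr k) = -1 := by
    intro i k hw; constructor <;> simp [col, hw]
  have hdeg : ∀ rr ∈ T, ∃ c₁ ∈ C, ∃ c₂ ∈ C, c₁ ≠ c₂ ∧
      col r d τ c₁ rr ≠ 0 ∧ col r d τ c₂ rr ≠ 0 := by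
    intro rr hrr
    obtain ⟨c₀, hc₀, hcol₀⟩ := (mem_T rr).1 hrr
    rcases rr with i | k
    · -- job row
      rcases c₀ with ⟨i₀, k₀⟩ | w
      swap
      · exact absurd hcol₀ (by rcases w with k | k <;> simp [col])
      have hwi : (r i₀ ≤ τ k₀.castSucc ∧ τ k₀.succ ≤ d i₀) ∧ i = i₀ := by
        by_cases hw : r i₀ ≤ τ k₀.castSucc ∧ τ k₀.succ ≤ d i₀
        · refine ⟨hw, ?_⟩
          by_contra hii
          exact hcol₀ (by simp [col, hw, hii])
        · exact absurd hcol₀ (by simp [col, hw])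
      obtain ⟨hw, rfl⟩ := hwi
      have hk₀ : k₀ ∈ Ks r d τ i := (hKs i k₀).2 hw
      have hall : ¬ ∀ b ∈ Ks r d τ i, b ≠ k₀ → IsInt (v (Sum.inl (i, b))) := by
        intro hall
        exact (mem_fracs.1 hc₀)
          (isInt_of_erase (Ks r d τ i) (fun b => v (Sum.inl (i, b))) k₀ hk₀
            ⟨p i, hsum i⟩ hall)
      push_neg at hall
      obtain ⟨k₁, hk₁, hk₁₀, hk₁f⟩ := hall
      refine ⟨Sum.inl (i, k₀), hc₀, Sum.inl (i, k₁), mem_fracs.2 hk₁f, ?_, hcol₀, ?_⟩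
      · simp [Ne.symm hk₁₀]
      · rw [(colx i k₁ ((hKs i k₁).1 hk₁)).1]; norm_num
    · -- interval row
      have hbal' : v (Sum.inr (Sum.inl k)) + v (Sum.inr (Sum.inr k)) =
          ∑ i ∈ Is r d τ k, v (Sum.inl (i, k)) := hbal k
      have xcol_ne : ∀ i₀ k₀, col r d τ (Sum.inl (i₀,k₀)) (Sum.inr k) ≠ 0 →
          (r i₀ ≤ τ k₀.castSucc ∧ τ k₀.succ ≤ d i₀) ∧ k₀ = k := by
        intro i₀ k₀ h
        by_cases hw : r i₀ ≤ τ k₀.castSucc ∧ τ k₀.succ ≤ d i₀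
        · refine ⟨hw, ?_⟩
          by_contra hkk
          exact h (by simp [col, hw, Ne.symm hkk])
        · exact absurd h (by simp [col, hw])
      have ycol : col r d τ (Sum.inr (Sum.inl k)) (Sum.inr k) = 1 := by simp [col]
      have zcol : col r d τ (Sum.inr (Sum.inr k)) (Sum.inr k) = 1 := by simp [col]
      by_cases hy : IsInt (v (Sum.inr (Sum.inl k))) <;>
        by_cases hz : IsInt (v (Sum.inr (Sum.inr k)))
      · -- both y,z integral: c₀ is an x column, find second x column
        have hsumInt : IsInt (∑ i ∈ Is r d τ k, v (Sum.inl (i, k))) := by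
          rw [← hbal']; exact hy.add hz
        obtain ⟨i₀, k₀⟩ | (k₀ | k₀) := c₀
        rotate_left
        · obtain rfl : k₀ = k := by
            by_contra hkk; exact hcol₀ (by simp [col, Ne.symm hkk])
          exact absurd hy (mem_fracs.1 hc₀)
        · obtain rfl : k₀ = k := by
            by_contra hkk; exact hcol₀ (by simp [col, Ne.symm hkk])
          exact absurd hz (mem_fracs.1 hc₀)
        obtain ⟨hw, rfl⟩ := xcol_ne i₀ k₀ hcol₀
        have hi₀ : i₀ ∈ Is r d τ k₀ := (hIs i₀ k₀).2 hw
        have hall : ¬ ∀ b ∈ Is r d τ k₀, b ≠ i₀ → IsInt (v (Sum.inl (b, k₀))) := by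
          intro hall
          exact (mem_fracs.1 hc₀)
            (isInt_of_erase (Is r d τ k₀) (fun b => v (Sum.inl (b, k₀))) i₀ hi₀ hsumInt hall)
        push_neg at hall
        obtain ⟨i₁, hi₁, hi₁₀, hi₁f⟩ := hall
        refine ⟨Sum.inl (i₀, k₀), hc₀, Sum.inl (i₁, k₀), mem_fracs.2 hi₁f, ?_, hcol₀, ?_⟩
        · simp [Ne.symm hi₁₀]
        · rw [(colx i₁ k₀ ((hIs i₁ k₀).1 hi₁)).2]; norm_num
      · -- y integral, z fractional
        by_cases hcy : c₀ = Sum.inr (Sum.inr k)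
        · subst hcy
          by_cases hall : ∀ b ∈ Is r d τ k, IsInt (v (Sum.inl (b, k)))
          · exact absurd (show IsInt (v (Sum.inr (Sum.inr k))) from by
              have : v (Sum.inr (Sum.inr k)) =
                  (∑ i ∈ Is r d τ k, v (Sum.inl (i, k))) - v (Sum.inr (Sum.inl k)) := by
                rw [← hbal']; ring
              rw [this]; exact (isInt_sum _ _ hall).sub hy) hz
          · push_neg at hall
            obtain ⟨i₁, hi₁, hi₁f⟩ := hall
            refine ⟨Sum.inr (Sum.inr k), hc₀, Sum.inl (i₁, k), mem_fracs.2 hi₁f, by simp,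
              hcol₀, ?_⟩
            rw [(colx i₁ k ((hIs i₁ k).1 hi₁)).2]; norm_num
        · refine ⟨c₀, hc₀, Sum.inr (Sum.inr k), mem_fracs.2 hz, hcy, hcol₀, by rw [zcol]; norm_num⟩
      · -- z integral, y fractional
        by_cases hcy : c₀ = Sum.inr (Sum.inl k)
        · subst hcy
          by_cases hall : ∀ b ∈ Is r d τ k, IsInt (v (Sum.inl (b, k)))
          · exact absurd (show IsInt (v (Sum.inr (Sum.inl k))) from by
              have : v (Sum.inr (Sum.inl k)) =
                  (∑ i ∈ Is r d τ k, v (Sum.inl (i, k))) - v (Sum.inr (Sum.inr k)) := by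
                rw [← hbal']; ring
              rw [this]; exact (isInt_sum _ _ hall).sub hz) hy
          · push_neg at hall
            obtain ⟨i₁, hi₁, hi₁f⟩ := hall
            refine ⟨Sum.inr (Sum.inl k), hc₀, Sum.inl (i₁, k), mem_fracs.2 hi₁f, by simp,
              hcol₀, ?_⟩
            rw [(colx i₁ k ((hIs i₁ k).1 hi₁)).2]; norm_num
        · refine ⟨c₀, hc₀, Sum.inr (Sum.inl k), mem_fracs.2 hy, hcy, hcol₀, by rw [ycol]; norm_num⟩
      · -- both fractional
        exact ⟨Sum.inr (Sum.inl k), mem_fracs.2 hy, Sum.inr (Sum.inr k), mem_fracs.2 hz,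
          by simp, by rw [ycol]; norm_num, by rw [zcol]; norm_num⟩
  -- counting: 2 |T| ≤ Σ_{c ∈ C} (number of touched rows of c)
  have count1 : 2 * T.card ≤ ∑ c ∈ C, ∑ rr ∈ T, (if col r d τ c rr ≠ 0 then (1:ℕ) else 0) := by
    rw [Finset.sum_comm]
    calc 2 * T.card = ∑ _rr ∈ T, 2 := by rw [Finset.sum_const]; ring
    _ ≤ _ := by
        apply Finset.sum_le_sum
        intro rr hrr
        obtain ⟨c₁, hc₁, c₂, hc₂, hne12, h1, h2⟩ := hdeg rr hrr
        calc (2:ℕ) = ∑ c ∈ ({c₁, c₂} : Finset (Vt ι K)), (if col r d τ c rr ≠ 0 then (1:ℕ) else 0) := by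
              rw [Finset.sum_pair hne12, if_pos h1, if_pos h2]
        _ ≤ _ := Finset.sum_le_sum_of_subset (by
              intro c hc
              simp only [Finset.mem_insert, Finset.mem_singleton] at hc
              rcases hc with rfl | rfl <;> assumption)
  have count2x : ∀ i k, (Sum.inl (i, k) : Vt ι K) ∈ C →
      ∑ rr ∈ T, (if col r d τ (Sum.inl (i, k)) rr ≠ 0 then (1:ℕ) else 0) ≤ 2 := by
    intro i k hc
    have hw := hxwin i k hc
    have hpt : ∀ rr : ι ⊕ Fin K, (if col r d τ (Sum.inl (i, k)) rr ≠ 0 then (1:ℕ) else 0) =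
        (if rr = Sum.inl i then 1 else 0) + (if rr = Sum.inr k then 1 else 0) := by
      intro rr
      rcases rr with i' | k'
      · by_cases hii : (Sum.inl i' : ι ⊕ Fin K) = Sum.inl i
        · simp [col, hw, hii]
        · simp [col, hw, hii, Sum.elim_inl]
      · by_cases hkk : (Sum.inr k' : ι ⊕ Fin K) = Sum.inr k
        · simp [col, hw, hkk]
        · simp [col, hw, hkk]
    calc ∑ rr ∈ T, (if col r d τ (Sum.inl (i, k)) rr ≠ 0 then (1:ℕ) else 0)
        ≤ ∑ rr : ι ⊕ Fin K, (if col r d τ (Sum.inl (i, k)) rr ≠ 0 then (1:ℕ) else 0) :=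
          Finset.sum_le_sum_of_subset (Finset.subset_univ T)
      _ = 2 := by
          simp only [hpt]
          rw [Finset.sum_add_distrib, Finset.sum_ite_eq' univ (Sum.inl i : ι ⊕ Fin K),
            Finset.sum_ite_eq' univ (Sum.inr k : ι ⊕ Fin K)]
          simp
  have count2yz : ∀ w : Fin K ⊕ Fin K,
      ∑ rr ∈ T, (if col r d τ (Sum.inr w) rr ≠ 0 then (1:ℕ) else 0) ≤ 1 := by
    intro w
    obtain ⟨k, hk⟩ : ∃ k, col r d τ (Sum.inr w) = fun rr => if rr = Sum.inr k then 1 else 0 := by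
      rcases w with k | k <;> exact ⟨k, rfl⟩
    calc ∑ rr ∈ T, (if col r d τ (Sum.inr w) rr ≠ 0 then (1:ℕ) else 0)
        ≤ ∑ rr : ι ⊕ Fin K, (if col r d τ (Sum.inr w) rr ≠ 0 then (1:ℕ) else 0) :=
          Finset.sum_le_sum_of_subset (Finset.subset_univ T)
      _ ≤ 1 := by
          rw [hk]
          have : ∀ rr : ι ⊕ Fin K, (if (if rr = Sum.inr k then (1:ℝ) else 0) ≠ 0 then (1:ℕ) else 0)
              = if rr = Sum.inr k then 1 else 0 := by
            intro rr; by_cases h : rr = Sum.inr k <;> simp [h]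
          simp only [this]
          rw [Finset.sum_ite_eq' univ (Sum.inr k : ι ⊕ Fin K)]
          simp
  -- the restricted columns cannot be linearly independent
  -- each column of `C` vanishes outside `T`
  have hoffT : ∀ c ∈ C, ∀ rr, rr ∉ T → col r d τ c rr = 0 := by
    intro c hc rr hrr
    by_contra h
    exact hrr (hsupp c hc rr h)
  have hnli : ¬ LinearIndependent ℝ
      (fun c : ↥C => (fun rr : ↥T => col r d τ (c : Vt ι K) (rr : ι ⊕ Fin K))) := by
    intro hli
    by_cases hyz : ∃ w : Fin K ⊕ Fin K, Sum.inr w ∈ C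
    · -- strict inequality |T| < |C|
      have hlt : 2 * T.card < 2 * C.card := by
        obtain ⟨w₀, hw₀⟩ := hyz
        calc 2 * T.card ≤ ∑ c ∈ C, ∑ rr ∈ T, (if col r d τ c rr ≠ 0 then (1:ℕ) else 0) :=
              count1
        _ < ∑ _c ∈ C, 2 := by
            apply Finset.sum_lt_sum
            · intro c hc
              rcases c with ⟨i, k⟩ | w
              · exact count2x i k hc
              · exact le_trans (count2yz w) (by norm_num)
            · exact ⟨Sum.inr w₀, hw₀, lt_of_le_of_lt (count2yz w₀) (by norm_num)⟩
        _ = 2 * C.card := by rw [Finset.sum_const]; ring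
      have hcard : T.card < C.card := by omega
      have := hli.fintype_card_le_finrank
      rw [Module.finrank_pi, Fintype.card_coe, Fintype.card_coe] at this
      omega
    · -- all columns are x columns; they satisfy one more linear relation
      push_neg at hyz
      have hcardle : T.card ≤ C.card := by
        have : 2 * T.card ≤ 2 * C.card := by
          calc 2 * T.card ≤ ∑ c ∈ C, ∑ rr ∈ T, (if col r d τ c rr ≠ 0 then (1:ℕ) else 0) :=
                count1
          _ ≤ ∑ _c ∈ C, 2 := by
              apply Finset.sum_le_sum
              intro c hc
              rcases c with ⟨i, k⟩ | w
              · exact count2x i k hc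
              · exact absurd hc (hyz w)
          _ = 2 * C.card := by rw [Finset.sum_const]; ring
        omega
      have hTne : T.Nonempty := by
        obtain ⟨c₀, hc₀⟩ := hne
        rcases c₀ with ⟨i, k⟩ | w
        · have hw := hxwin i k hc₀
          exact ⟨Sum.inl i, hsupp _ hc₀ _ (by rw [(colx i k hw).1]; norm_num)⟩
        · exact absurd hc₀ (hyz w)
      -- the summing functional
      let φ : (↥T → ℝ) →ₗ[ℝ] ℝ :=
        { toFun := fun f => ∑ rr, f rr
          map_add' := fun f g => by simp [Finset.sum_add_distrib]
          map_smul' := fun m f => by simp [Finset.mul_sum] }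
      have hker : ∀ c : ↥C, (fun rr : ↥T => col r d τ (c : Vt ι K) (rr : ι ⊕ Fin K)) ∈
          LinearMap.ker φ := by
        rintro ⟨c, hc⟩
        rcases c with ⟨i, k⟩ | w
        swap
        · exact absurd hc (hyz w)
        have hw := hxwin i k hc
        simp only [LinearMap.mem_ker]
        show ∑ rr : ↥T, col r d τ (Sum.inl (i, k)) (rr : ι ⊕ Fin K) = 0
        rw [Finset.sum_coe_sort T (fun rr => col r d τ (Sum.inl (i, k)) rr),
          Finset.sum_subset (Finset.subset_univ T) (fun rr _ hrr => hoffT _ hc rr hrr)]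
        exact col_sum_x r d τ i k hw
      have hfam : LinearIndependent ℝ
          (fun c : ↥C => (⟨_, hker c⟩ : ↥(LinearMap.ker φ))) :=
        LinearIndependent.of_comp (LinearMap.ker φ).subtype hli
      have hcard2 := hfam.fintype_card_le_finrank
      have hTcard : (0:ℕ) < T.card := Finset.card_pos.2 hTne
      have hsurj : Function.Surjective φ := by
        intro a
        refine ⟨(a / (T.card : ℝ)) • ((fun _ => (1:ℝ)) : ↥T → ℝ), ?_⟩
        show ∑ _rr : ↥T, (a / (T.card : ℝ)) • (1:ℝ) = a
        rw [Finset.sum_const, Finset.card_univ, Fintype.card_coe]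
        have hne0 : (T.card : ℝ) ≠ 0 := Nat.cast_ne_zero.2 (by omega)
        rw [nsmul_eq_mul, smul_eq_mul]
        field_simp
      have hrange : LinearMap.range φ = ⊤ := LinearMap.range_eq_top.2 hsurj
      have hrk := LinearMap.finrank_range_add_finrank_ker φ
      rw [hrange, finrank_top, Module.finrank_pi, Module.finrank_self,
        Fintype.card_coe] at hrk
      rw [Fintype.card_coe] at hcard2
      omega
  
  rw [Fintype.not_linearIndependent_iff] at hnli
  obtain ⟨g, hg0, c₀, hgc₀⟩ := hnli
  set σ : Vt ι K → ℝ := fun c => if h : c ∈ C then g ⟨c, h⟩ else 0 with hσ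
  have hrow : ∀ rr : ι ⊕ Fin K, ∑ c : Vt ι K, σ c * col r d τ c rr = 0 := by
    intro rr
    by_cases hrT : rr ∈ T
    · have h1 : ∑ c ∈ C, σ c * col r d τ c rr = ∑ c : Vt ι K, σ c * col r d τ c rr := by
        apply Finset.sum_subset (Finset.subset_univ C)
        intro c _ hc
        rw [hσ]; simp only [dif_neg hc, zero_mul]
      rw [← h1, ← Finset.sum_attach C (fun c => σ c * col r d τ c rr)]
      have h2 : ∀ c : ↥C, σ (c : Vt ι K) * col r d τ (c : Vt ι K) rr =
          g c * col r d τ (c : Vt ι K) rr := by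
        intro c
        rw [hσ]; simp only [dif_pos c.2]
      simp only [h2]
      have h3 := congrFun hg0 ⟨rr, hrT⟩
      rw [Finset.sum_apply] at h3
      simpa using h3
    · apply Finset.sum_eq_zero
      intro c _
      by_cases hc : c ∈ C
      · rw [hoffT c hc rr hrT, mul_zero]
      · rw [hσ]; simp only [dif_neg hc, zero_mul]
  have hinj1 : ∀ i : ι, Function.Injective (fun k : Fin K => (Sum.inl (i, k) : Vt ι K)) := by
    intro i a b h
    simpa using h
  have hinj2 : ∀ k : Fin K, Function.Injective (fun i : ι => (Sum.inl (i, k) : Vt ι K)) := by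
    intro k a b h
    simpa using h
  refine ⟨σ, ?_, ?_, ?_, ?_⟩
  · intro c hc
    by_cases h : c ∈ C
    · exact mem_fracs.1 h
    · rw [hσ] at hc; simp only [dif_neg h] at hc; exact absurd rfl hc
  · refine ⟨c₀, ?_⟩
    rw [hσ]; simp only [dif_pos c₀.2]
    simpa using hgc₀
  · intro i
    have h := hrow (Sum.inl i)
    simp only [col_at_job r d τ i, mul_ite, mul_one, mul_zero] at h
    rw [Finset.sum_ite_mem, Finset.univ_inter,
      Finset.sum_image (fun a _ b _ hab => hinj1 i hab)] at h
    exact h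
  · intro k
    have h := hrow (Sum.inr k)
    simp only [col_at_int r d τ k, mul_sub, mul_add, mul_ite, mul_one, mul_zero] at h
    rw [Finset.sum_sub_distrib, Finset.sum_add_distrib,
      Finset.sum_ite_eq' univ (Sum.inr (Sum.inl k) : Vt ι K) σ,
      Finset.sum_ite_eq' univ (Sum.inr (Sum.inr k) : Vt ι K) σ,
      Finset.sum_ite_mem, Finset.univ_inter,
      Finset.sum_image (fun a _ b _ hab => hinj2 k hab)] at h
    simp only [Finset.mem_univ, if_pos] at h
    linarith [h]

lemma frac_bounds {a : ℝ} (ha : ¬ IsInt a) : ((⌊a⌋ : ℤ) : ℝ) < a ∧ a < ((⌈a⌉ : ℤ) : ℝ) :=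
  ⟨lt_of_le_of_ne (Int.floor_le a) (fun h => ha ⟨⌊a⌋, h.symm⟩),
    lt_of_le_of_ne (Int.le_ceil a) (fun h => ha ⟨⌈a⌉, h⟩)⟩

lemma improve (p : ι → ℕ) (v : Vt ι K → ℝ) (hf : Feas p r d L τ v)
    (hne : (fracs v).Nonempty) :
    ∃ v' : Vt ι K → ℝ, Feas p r d L τ v' ∧ (fracs v').card < (fracs v).card ∧
      ∑ k, v (Sum.inr (Sum.inl k)) ≤ ∑ k, v' (Sum.inr (Sum.inl k)) := by
  classical
  obtain ⟨σ₀, hsupp₀, hne₀, hE1₀, hE2₀⟩ := exists_kernel r d L τ p v hf hne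
  obtain ⟨σ, hsupp, hσne, hE1, hE2, hobj⟩ :
      ∃ σ : Vt ι K → ℝ, (∀ c, σ c ≠ 0 → ¬ IsInt (v c)) ∧ (∃ c, σ c ≠ 0) ∧
        (∀ i, ∑ k ∈ Ks r d τ i, σ (Sum.inl (i, k)) = 0) ∧
        (∀ k, σ (Sum.inr (Sum.inl k)) + σ (Sum.inr (Sum.inr k)) =
          ∑ i ∈ Is r d τ k, σ (Sum.inl (i, k))) ∧
        0 ≤ ∑ k, σ (Sum.inr (Sum.inl k)) := by
    by_cases hs : 0 ≤ ∑ k, σ₀ (Sum.inr (Sum.inl k))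
    · exact ⟨σ₀, hsupp₀, hne₀, hE1₀, hE2₀, hs⟩
    · refine ⟨-σ₀, fun c hc => hsupp₀ c (by simpa using hc), ?_, ?_, ?_, ?_⟩
      · obtain ⟨c, hc⟩ := hne₀; exact ⟨c, by simpa using hc⟩
      · intro i; simp only [Pi.neg_apply, Finset.sum_neg_distrib, hE1₀ i, neg_zero]
      · intro k; simp only [Pi.neg_apply, Finset.sum_neg_distrib, ← hE2₀ k]; ring
      · simp only [Pi.neg_apply, Finset.sum_neg_distrib]; linarith
  obtain ⟨hsum, hwin0, hbal, hxb, hyb, hzb⟩ := hf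
  set S : Finset (Vt ι K) := univ.filter (fun c => σ c ≠ 0) with hS
  have hSne : S.Nonempty := by
    obtain ⟨c, hc⟩ := hσne; exact ⟨c, by simp [hS, hc]⟩
  have hmemS : ∀ c, c ∈ S ↔ σ c ≠ 0 := by intro c; simp [hS]
  set step : Vt ι K → ℝ :=
    fun c => (if 0 < σ c then ((⌈v c⌉ : ℤ) : ℝ) - v c else v c - ((⌊v c⌋ : ℤ) : ℝ)) / |σ c|
    with hstep
  set t : ℝ := S.inf' hSne step with ht
  have htpos : 0 < t := by
    rw [ht, Finset.lt_inf'_iff]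
    intro c hc
    have hσc := (hmemS c).1 hc
    have hfr := frac_bounds (hsupp c hσc)
    apply div_pos
    · split_ifs with h
      · linarith [hfr.2]
      · linarith [hfr.1]
    · exact abs_pos.2 hσc
  have htle : ∀ c, σ c ≠ 0 → t ≤ step c := by
    intro c hc
    exact Finset.inf'_le step ((hmemS c).2 hc)
  set v' : Vt ι K → ℝ := fun c => v c + t * σ c with hv'
  have hfix : ∀ c, σ c = 0 → v' c = v c := by
    intro c hc; rw [hv']; simp [hc]
  have hbox : ∀ c, ((⌊v c⌋ : ℤ) : ℝ) ≤ v' c ∧ v' c ≤ ((⌈v c⌉ : ℤ) : ℝ) := by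
    intro c
    have hv'c : v' c = v c + t * σ c := rfl
    rcases lt_trichotomy (σ c) 0 with h | h | h
    · have hts := htle c (ne_of_lt h)
      simp only [hstep] at hts
      rw [if_neg (by linarith), abs_of_neg h] at hts
      have h1 : ((v c - ((⌊v c⌋ : ℤ) : ℝ)) / (-σ c)) * σ c ≤ t * σ c :=
        mul_le_mul_of_nonpos_right hts (le_of_lt h)
      have hn : (-σ c) ≠ 0 := ne_of_gt (by linarith)
      have h2 : ((v c - ((⌊v c⌋ : ℤ) : ℝ)) / (-σ c)) * σ c = -(v c - ((⌊v c⌋ : ℤ) : ℝ)) := by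
        rw [div_mul_eq_mul_div, div_eq_iff hn]; ring
      constructor
      · rw [hv'c]; rw [h2] at h1; linarith
      · rw [hv'c]
        have h3 : t * σ c ≤ 0 := mul_nonpos_of_nonneg_of_nonpos (le_of_lt htpos) (le_of_lt h)
        have h4 := Int.le_ceil (v c)
        linarith
    · rw [hfix c h]
      exact ⟨Int.floor_le (v c), Int.le_ceil (v c)⟩
    · have hts := htle c (ne_of_gt h)
      simp only [hstep] at hts
      rw [if_pos h, abs_of_pos h] at hts
      constructor
      · rw [hv'c]
        have h3 : 0 ≤ t * σ c := mul_nonneg (le_of_lt htpos) (le_of_lt h)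
        have h4 := Int.floor_le (v c)
        linarith
      · rw [hv'c]
        have h1 : t * σ c ≤ ((((⌈v c⌉ : ℤ) : ℝ) - v c) / σ c) * σ c :=
          mul_le_mul_of_nonneg_right hts (le_of_lt h)
        have h2 : ((((⌈v c⌉ : ℤ) : ℝ) - v c) / σ c) * σ c = ((⌈v c⌉ : ℤ) : ℝ) - v c := by
          field_simp
        linarith
  have hint : ∀ c, IsInt (v c) → v' c = v c := by
    intro c hc
    by_cases h : σ c = 0
    · exact hfix c h
    · exact absurd hc (hsupp c h)
  have hvnonneg : ∀ c, 0 ≤ v c := by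
    intro c
    rcases c with ⟨i, k⟩ | (k | k)
    · exact (hxb i k).1
    · exact (hyb k).1
    · exact hzb k
  obtain ⟨c₁, hc₁S, hc₁⟩ := Finset.exists_mem_eq_inf' hSne step
  have hc₁int : IsInt (v' c₁) := by
    have hσ₁ := (hmemS c₁).1 hc₁S
    have hv'c : v' c₁ = v c₁ + t * σ c₁ := rfl
    rcases lt_trichotomy (σ c₁) 0 with h | h | h
    · refine ⟨⌊v c₁⌋, ?_⟩
      rw [hv'c, ht, hc₁]
      simp only [hstep]
      rw [if_neg (by linarith), abs_of_neg h]
      have hn : (-σ c₁) ≠ 0 := ne_of_gt (by linarith)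
      rw [div_mul_eq_mul_div]
      have h5 : (v c₁ - ((⌊v c₁⌋ : ℤ) : ℝ)) * σ c₁ / (-σ c₁) = -(v c₁ - ((⌊v c₁⌋ : ℤ) : ℝ)) := by
        rw [div_eq_iff hn]; ring
      rw [h5]; ring
    · exact absurd h hσ₁
    · refine ⟨⌈v c₁⌉, ?_⟩
      rw [hv'c, ht, hc₁]
      simp only [hstep]
      rw [if_pos h, abs_of_pos h]
      have hn : σ c₁ ≠ 0 := ne_of_gt h
      rw [div_mul_eq_mul_div]
      have h5 : (((⌈v c₁⌉ : ℤ) : ℝ) - v c₁) * σ c₁ / σ c₁ = ((⌈v c₁⌉ : ℤ) : ℝ) - v c₁ := by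
        first
        | (rw [div_eq_iff hn]; ring)
        | rw [div_eq_iff hn]
        | field_simp
      rw [h5]; ring
  have hc₁fr : c₁ ∈ fracs v := mem_fracs.2 (hsupp c₁ ((hmemS c₁).1 hc₁S))
  have hsub : fracs v' ⊆ (fracs v).erase c₁ := by
    intro c hc
    rw [Finset.mem_erase]
    have hcf : ¬ IsInt (v' c) := mem_fracs.1 hc
    constructor
    · rintro rfl; exact hcf hc₁int
    · rw [mem_fracs]
      intro hvc
      exact hcf (by rw [hint c hvc]; exact hvc)
  refine ⟨v', ?_, ?_, ?_⟩
  · refine ⟨?_, ?_, ?_, ?_, ?_, ?_⟩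
    · intro i
      show ∑ k ∈ Ks r d τ i, (v (Sum.inl (i, k)) + t * σ (Sum.inl (i, k))) = (p i : ℝ)
      rw [Finset.sum_add_distrib, ← Finset.mul_sum, hE1 i, mul_zero, add_zero]
      exact hsum i
    · intro i k hw
      show v (Sum.inl (i, k)) + t * σ (Sum.inl (i, k)) = 0
      have h1 : v (Sum.inl (i, k)) = 0 := hwin0 i k hw
      have h2 : σ (Sum.inl (i, k)) = 0 := by
        by_contra h
        exact (hsupp _ h) (h1 ▸ isInt_zero)
      rw [h1, h2, mul_zero, add_zero]
    · intro k
      show (v (Sum.inr (Sum.inl k)) + t * σ (Sum.inr (Sum.inl k))) +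
          (v (Sum.inr (Sum.inr k)) + t * σ (Sum.inr (Sum.inr k))) =
          ∑ i ∈ Is r d τ k, (v (Sum.inl (i, k)) + t * σ (Sum.inl (i, k)))
      have hbal'' : v (Sum.inr (Sum.inl k)) + v (Sum.inr (Sum.inr k)) =
          ∑ i ∈ Is r d τ k, v (Sum.inl (i, k)) := hbal k
      rw [Finset.sum_add_distrib, ← Finset.mul_sum, ← hE2 k, ← hbal'']
      ring
    · intro i k
      constructor
      · calc (0:ℝ) ≤ ((⌊v (Sum.inl (i, k))⌋ : ℤ) : ℝ) := by
              exact_mod_cast Int.floor_nonneg.2 (hvnonneg _)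
        _ ≤ v' (Sum.inl (i, k)) := (hbox _).1
      · calc v' (Sum.inl (i, k)) ≤ ((⌈v (Sum.inl (i, k))⌉ : ℤ) : ℝ) := (hbox _).2
        _ ≤ ((τ k.succ - τ k.castSucc : ℕ) : ℝ) := by
            have := (hxb i k).2
            exact_mod_cast Int.ceil_le.2 (by exact_mod_cast this)
    · intro k
      constructor
      · calc (0:ℝ) ≤ ((⌊v (Sum.inr (Sum.inl k))⌋ : ℤ) : ℝ) := by
              exact_mod_cast Int.floor_nonneg.2 (hvnonneg _)
        _ ≤ v' (Sum.inr (Sum.inl k)) := (hbox _).1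
      · calc v' (Sum.inr (Sum.inl k)) ≤ ((⌈v (Sum.inr (Sum.inl k))⌉ : ℤ) : ℝ) := (hbox _).2
        _ ≤ (L : ℝ) * ((τ k.succ - τ k.castSucc : ℕ) : ℝ) := by
            have h1 := (hyb k).2
            have h2 : (L : ℝ) * ((τ k.succ - τ k.castSucc : ℕ) : ℝ) =
                ((L * (τ k.succ - τ k.castSucc) : ℕ) : ℝ) := by push_cast; ring
            rw [h2] at h1 ⊢
            exact_mod_cast Int.ceil_le.2 (by exact_mod_cast h1)
    · intro k
      calc (0:ℝ) ≤ ((⌊v (Sum.inr (Sum.inr k))⌋ : ℤ) : ℝ) := by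
            exact_mod_cast Int.floor_nonneg.2 (hvnonneg _)
      _ ≤ v' (Sum.inr (Sum.inr k)) := (hbox _).1
  · calc (fracs v').card ≤ ((fracs v).erase c₁).card := Finset.card_le_card hsub
    _ < (fracs v).card := by
        rw [Finset.card_erase_of_mem hc₁fr]
        have : 0 < (fracs v).card := Finset.card_pos.2 ⟨c₁, hc₁fr⟩
        omega
  · show ∑ k, v (Sum.inr (Sum.inl k)) ≤ ∑ k, (v (Sum.inr (Sum.inl k)) + t * σ (Sum.inr (Sum.inl k)))
    rw [Finset.sum_add_distrib, ← Finset.mul_sum]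
    nlinarith [htpos, hobj]

lemma integralize (p : ι → ℕ) : ∀ n (v : Vt ι K → ℝ), Feas p r d L τ v →
    (fracs v).card ≤ n →
    ∃ v', Feas p r d L τ v' ∧ fracs v' = ∅ ∧
      ∑ k, v (Sum.inr (Sum.inl k)) ≤ ∑ k, v' (Sum.inr (Sum.inl k)) := by
  intro n
  induction n with
  | zero =>
    intro v hf hc
    exact ⟨v, hf, Finset.card_eq_zero.1 (Nat.le_zero.1 hc), le_refl _⟩
  | succ n ih =>
    intro v hf hc
    by_cases h : fracs v = ∅
    · exact ⟨v, hf, h, le_refl _⟩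
    · obtain ⟨v₁, hf₁, hlt, hle⟩ := improve r d L τ p v hf (Finset.nonempty_of_ne_empty h)
      obtain ⟨v', hf', hempty, hle'⟩ := ih v₁ hf₁ (by omega)
      exact ⟨v', hf', hempty, le_trans hle hle'⟩

lemma teles (hmono : StrictMono τ) (b : Fin (K + 1)) : ∀ (a : Fin (K + 1)), a ≤ b →
    ∑ k ∈ univ.filter (fun k : Fin K => a ≤ k.castSucc ∧ k.succ ≤ b),
      (τ k.succ - τ k.castSucc) = τ b - τ a := by
  induction b using Fin.induction with
  | zero =>
    intro a ha
    have ha0 : a = 0 := le_antisymm ha (Fin.zero_le a)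
    subst ha0
    rw [Finset.filter_false_of_mem, Finset.sum_empty, Nat.sub_self]
    intro k _
    rintro ⟨-, hk⟩
    have := Fin.le_def.1 hk
    simp [Fin.val_succ] at this
  | succ j ihj =>
    intro a ha
    by_cases haj : a ≤ j.castSucc
    · have hset : univ.filter (fun k : Fin K => a ≤ k.castSucc ∧ k.succ ≤ j.succ) =
          insert j (univ.filter (fun k : Fin K => a ≤ k.castSucc ∧ k.succ ≤ j.castSucc)) := by
        ext k
        simp only [Finset.mem_filter, Finset.mem_univ, true_and, Finset.mem_insert]
        simp only [Fin.le_def, Fin.ext_iff, Fin.coe_castSucc, Fin.val_succ]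
        have := Fin.le_def.1 haj
        simp only [Fin.coe_castSucc] at this
        omega
      have hnotmem : j ∉ univ.filter (fun k : Fin K => a ≤ k.castSucc ∧ k.succ ≤ j.castSucc) := by
        simp only [Finset.mem_filter, Finset.mem_univ, true_and, not_and]
        intro
        rw [Fin.le_def]
        simp only [Fin.coe_castSucc, Fin.val_succ]
        omega
      rw [hset, Finset.sum_insert hnotmem, ihj a haj]
      have h1 : τ a ≤ τ j.castSucc := hmono.le_iff_le.2 haj
      have h2 : τ j.castSucc < τ j.succ := hmono Fin.castSucc_lt_succ
      omega
    · have haeq : a = j.succ := by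
        rw [Fin.ext_iff]
        have h1 := Fin.le_def.1 ha
        have h2 : j.castSucc < a := lt_of_not_ge haj
        have h3 := Fin.lt_def.1 h2
        simp only [Fin.val_succ, Fin.coe_castSucc] at h1 h3 ⊢
        omega
      subst haeq
      rw [Finset.filter_false_of_mem, Finset.sum_empty, Nat.sub_self]
      intro k _
      rintro ⟨h1, h2⟩
      have h1' := Fin.le_def.1 h1
      have h2' := Fin.le_def.1 h2
      simp only [Fin.val_succ, Fin.coe_castSucc] at h1' h2'
      omega

lemma capacity (hmono : StrictMono τ) (hrmem : ∀ i, ∃ k, τ k = r i)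
    (hdmem : ∀ i, ∃ k, τ k = d i) (hfeas : ∀ i, r i + p i ≤ d i) (i : ι) :
    p i ≤ ∑ k ∈ Ks r d τ i, (τ k.succ - τ k.castSucc) := by
  obtain ⟨a, ha⟩ := hrmem i
  obtain ⟨b, hb⟩ := hdmem i
  have hab : a ≤ b := by
    rw [← hmono.le_iff_le]
    rw [ha, hb]
    have := hfeas i
    omega
  have hKsEq : Ks r d τ i = univ.filter (fun k : Fin K => a ≤ k.castSucc ∧ k.succ ≤ b) := by
    ext k
    simp only [Ks, Finset.mem_filter, Finset.mem_univ, true_and]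
    rw [← ha, ← hb, hmono.le_iff_le, hmono.le_iff_le]
  rw [hKsEq, teles τ hmono b a hab, ha, hb]
  have := hfeas i
  omega

lemma int_nonneg_nat {a : ℝ} (ha : IsInt a) (h0 : 0 ≤ a) : ∃ m : ℕ, a = m := by
  obtain ⟨m, rfl⟩ := ha
  have h0' : (0:ℤ) ≤ m := by exact_mod_cast h0
  exact ⟨m.toNat, by exact_mod_cast (Int.toNat_of_nonneg h0').symm⟩

end

end Stmt18Aux

open Stmt18Aux in
/-- The LP for `L | r_i, d_i, c_i = 1, pmtn | F` with integer data admits an optimal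
solution with integer processed amounts; hence the unit-time non-preemptive problem
is solvable via the same linear program. -/
theorem stmt18 {ι : Type*} [Fintype ι] (K : ℕ) (p r d : ι → ℕ) (L : ℕ)
    (τ : Fin (K + 1) → ℕ) (hmono : StrictMono τ)
    (hrmem : ∀ i, ∃ k, τ k = r i) (hdmem : ∀ i, ∃ k, τ k = d i)
    (hbp : ∀ k, ∃ i, τ k = r i ∨ τ k = d i)
    (hfeas : ∀ i, r i + p i ≤ d i) :
    ∃ (x : ι → Fin K → ℝ) (y z : Fin K → ℝ),
      LPFeasible K p r d L τ x y z ∧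
      (∀ i k, ∃ m : ℕ, x i k = m) ∧
      (∀ k, ∃ m : ℕ, y k = m) ∧
      (∀ k, ∃ m : ℕ, z k = m) ∧
      ∀ x' y' z', LPFeasible K p r d L τ x' y' z' → ∑ k, y' k ≤ ∑ k, y k := by
  classical
  letI : DecidableEq ι := Classical.decEq ι
  -- an initial (fractional) feasible solution
  set Δ : Fin K → ℕ := fun k => τ k.succ - τ k.castSucc with hΔ
  set x₀ : ι → Fin K → ℝ := fun i k =>
    if r i ≤ τ k.castSucc ∧ τ k.succ ≤ d i then
      ((p i * Δ k : ℕ) : ℝ) / ((∑ k' ∈ Ks r d τ i, Δ k' : ℕ) : ℝ) else 0 with hx₀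
  have hcap : ∀ i, p i ≤ ∑ k' ∈ Ks r d τ i, Δ k' :=
    capacity p r d τ hmono hrmem hdmem hfeas
  have hx₀nonneg : ∀ i k, 0 ≤ x₀ i k := by
    intro i k
    rw [hx₀]
    dsimp only
    split_ifs
    · positivity
    · exact le_refl 0
  have hx₀cap : ∀ i k, x₀ i k ≤ ((Δ k : ℕ) : ℝ) := by
    intro i k
    rw [hx₀]
    dsimp only
    split_ifs with hw
    · by_cases hD : (∑ k' ∈ Ks r d τ i, Δ k') = 0
      · rw [hD]
        rw [Nat.cast_zero, div_zero]
        positivity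
      · rw [div_le_iff₀ (by exact_mod_cast Nat.pos_of_ne_zero hD)]
        have : p i * Δ k ≤ Δ k * (∑ k' ∈ Ks r d τ i, Δ k') := by
          calc p i * Δ k ≤ (∑ k' ∈ Ks r d τ i, Δ k') * Δ k :=
                Nat.mul_le_mul_right _ (hcap i)
          _ = Δ k * (∑ k' ∈ Ks r d τ i, Δ k') := Nat.mul_comm _ _
        exact_mod_cast this
    · positivity
  have hLP₀ : LPFeasible K p r d L τ x₀ (fun _ => 0)
      (fun k => ∑ i ∈ Is r d τ k, x₀ i k) := by
    refine ⟨?_, ?_, ?_, ?_, ?_, ?_⟩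
    · intro i
      by_cases hD : (∑ k' ∈ Ks r d τ i, Δ k') = 0
      · have hp0 : p i = 0 := by have := hcap i; omega
        rw [hp0, Nat.cast_zero]
        apply Finset.sum_eq_zero
        intro k hk
        simp only [Finset.mem_filter, Finset.mem_univ, true_and] at hk
        rw [hx₀]
        dsimp only
        rw [if_pos hk, hp0]
        simp
      · have hDpos : (0:ℝ) < ((∑ k' ∈ Ks r d τ i, Δ k' : ℕ) : ℝ) := by
          exact_mod_cast Nat.pos_of_ne_zero hD
        have hKsf : (univ.filter (fun k : Fin K => r i ≤ τ k.castSucc ∧ τ k.succ ≤ d i))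
            = Ks r d τ i := rfl
        rw [hKsf]
        have hterm : ∀ k ∈ Ks r d τ i, x₀ i k =
            ((p i : ℝ) * (Δ k : ℝ)) / ((∑ k' ∈ Ks r d τ i, Δ k' : ℕ) : ℝ) := by
          intro k hk
          simp only [Ks, Finset.mem_filter, Finset.mem_univ, true_and] at hk
          rw [hx₀]
          dsimp only
          rw [if_pos hk]
          push_cast
          ring
        rw [Finset.sum_congr rfl hterm, ← Finset.sum_div, ← Finset.mul_sum]
        have hcast : (∑ k ∈ Ks r d τ i, (Δ k : ℝ)) = ((∑ k' ∈ Ks r d τ i, Δ k' : ℕ) : ℝ) := by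
          push_cast; rfl
        rw [hcast, mul_div_assoc, div_self (ne_of_gt hDpos), mul_one]
    · intro i k hw
      rw [hx₀]
      dsimp only
      rw [if_neg hw]
    · intro k
      show (0:ℝ) + _ = _
      rw [zero_add]
      rfl
    · intro i k
      exact ⟨hx₀nonneg i k, hx₀cap i k⟩
    · intro k
      constructor
      · exact le_refl 0
      · positivity
    · intro k
      exact Finset.sum_nonneg fun i _ => hx₀nonneg i k
  set v₀ : Vt ι K → ℝ := Sum.elim (fun ik => x₀ ik.1 ik.2)
    (Sum.elim (fun _ => 0) (fun k => ∑ i ∈ Is r d τ k, x₀ i k)) with hv₀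
  have hfeas₀ : Feas p r d L τ v₀ := hLP₀
  obtain ⟨v₁, hf₁, hint₁, hobj₁⟩ := integralize r d L τ p ((fracs v₀).card) v₀ hfeas₀ le_rfl
  -- integral solutions have natural number coordinates
  have hints : ∀ v : Vt ι K → ℝ, fracs v = ∅ → ∀ c, IsInt (v c) := by
    intro v h c
    by_contra hni
    exact (Finset.eq_empty_iff_forall_notMem.1 h c) (mem_fracs.2 hni)
  have hnatval : ∀ v : Vt ι K → ℝ, Feas p r d L τ v → fracs v = ∅ →
      ∀ c, ∃ m : ℕ, v c = m := by
    intro v hfv he c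
    apply int_nonneg_nat (hints v he c)
    obtain ⟨h1, h2, h3, h4, h5, h6⟩ := hfv
    rcases c with ⟨i, k⟩ | (k | k)
    exacts [(h4 i k).1, (h5 k).1, h6 k]
  have hobjnat : ∀ v : Vt ι K → ℝ, Feas p r d L τ v → fracs v = ∅ →
      ∃ n : ℕ, ∑ k, v (Sum.inr (Sum.inl k)) = (n : ℝ) := by
    intro v hfv he
    choose m hm using fun k : Fin K => hnatval v hfv he (Sum.inr (Sum.inl k))
    refine ⟨∑ k, m k, ?_⟩
    rw [Finset.sum_congr rfl (fun k _ => hm k)]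
    push_cast
    rfl
  set B : ℕ := ∑ k : Fin K, L * Δ k with hB
  have hBbound : ∀ v : Vt ι K → ℝ, Feas p r d L τ v →
      ∑ k, v (Sum.inr (Sum.inl k)) ≤ (B : ℝ) := by
    intro v hfv
    obtain ⟨-, -, -, -, h5, -⟩ := hfv
    calc ∑ k, v (Sum.inr (Sum.inl k)) ≤ ∑ k : Fin K, (L : ℝ) * ((Δ k : ℕ) : ℝ) :=
          Finset.sum_le_sum fun k _ => (h5 k).2
    _ = (B : ℝ) := by rw [hB]; push_cast; rfl
  set P : ℕ → Prop := fun n => ∃ v : Vt ι K → ℝ, Feas p r d L τ v ∧ fracs v = ∅ ∧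
    ∑ k, v (Sum.inr (Sum.inl k)) = (n : ℝ) with hP
  have hPle : ∀ n, P n → n ≤ B := by
    intro n hn
    obtain ⟨v, hfv, -, hvn⟩ := hn
    have := hBbound v hfv
    rw [hvn] at this
    exact_mod_cast this
  letI : DecidablePred P := Classical.decPred P
  obtain ⟨n₁, hn₁⟩ := hobjnat v₁ hf₁ hint₁
  have hPn₁ : P n₁ := ⟨v₁, hf₁, hint₁, hn₁⟩
  set M : ℕ := Nat.findGreatest P B with hM
  have hPM : P M := Nat.findGreatest_spec (hPle n₁ hPn₁) hPn₁
  obtain ⟨vS, hfS, hiS, hvalS⟩ := hPM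
  refine ⟨fun i k => vS (Sum.inl (i, k)), fun k => vS (Sum.inr (Sum.inl k)),
    fun k => vS (Sum.inr (Sum.inr k)), hfS, ?_, ?_, ?_, ?_⟩
  · intro i k; exact hnatval vS hfS hiS (Sum.inl (i, k))
  · intro k; exact hnatval vS hfS hiS (Sum.inr (Sum.inl k))
  · intro k; exact hnatval vS hfS hiS (Sum.inr (Sum.inr k))
  · intro x' y' z' hLP'
    set v' : Vt ι K → ℝ := Sum.elim (fun ik => x' ik.1 ik.2) (Sum.elim y' z') with hv'
    have hf' : Feas p r d L τ v' := hLP'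
    obtain ⟨v'', hf'', hi'', hle''⟩ := integralize r d L τ p ((fracs v').card) v' hf' le_rfl
    obtain ⟨n'', hn''⟩ := hobjnat v'' hf'' hi''
    have hP'' : P n'' := ⟨v'', hf'', hi'', hn''⟩
    have hle1 : n'' ≤ M := Nat.le_findGreatest (hPle n'' hP'') hP''
    calc ∑ k, y' k = ∑ k, v' (Sum.inr (Sum.inl k)) := rfl
    _ ≤ ∑ k, v'' (Sum.inr (Sum.inl k)) := hle''
    _ = (n'' : ℝ) := hn''
    _ ≤ (M : ℝ) := Nat.cast_le.2 hle1
    _ = ∑ k, vS (Sum.inr (Sum.inl k)) := hvalS.symm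
end

section
/- Given an interval [τ_{k−1}, τ_k] of integer length Δ and jobs i ∈ J_k with demands x_{ik} ∈ [0, Δ] summing to at most 2Δ, the wrap-around procedure that places jobs consecutively left to right, starting a new line upon reaching the interval end (splitting a job into at most two parts), yields for each job a union of at most two subintervals of [τ_{k−1}, τ_k] of total length x_{ik}, such that at every point of the interval at most ⌈(Σ_i x_{ik})/Δ⌉ jobs run, and no job runs simultaneously with itself. -/
open Finset

/-- Offset of job `i` in the wrap-around (IntervalScheduling) procedure:
total demand of the jobs placed before `i`. -/
def wrapStart {n : ℕ} (w : Fin n → ℕ) (i : Fin n) : ℕ :=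
  ∑ j ∈ univ.filter (fun j : Fin n => j < i), w j

/-- Job `i` covers point `t` of the interval `[0, Δ)` in the wrap-around procedure. -/
def wrapCovers {n : ℕ} (w : Fin n → ℕ) (Δ : ℕ) (i : Fin n) (t : ℕ) : Prop :=
  ∃ u < w i, (wrapStart w i + u) % Δ = t

instance {n : ℕ} (w : Fin n → ℕ) (Δ : ℕ) (i : Fin n) (t : ℕ) :
    Decidable (wrapCovers w Δ i t) :=
  inferInstanceAs (Decidable (∃ u < w i, (wrapStart w i + u) % Δ = t))

lemma wrapStart_mono {n : ℕ} (w : Fin n → ℕ) {i j : Fin n} (h : i < j) :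
    wrapStart w i + w i ≤ wrapStart w j := by
  unfold wrapStart
  have hni : i ∉ univ.filter (fun k : Fin n => k < i) := by simp
  have hsub : insert i (univ.filter (fun k : Fin n => k < i)) ⊆
      univ.filter (fun k : Fin n => k < j) := by
    intro k hk
    simp only [mem_insert, mem_filter, mem_univ, true_and] at *
    rcases hk with rfl | hk
    · exact h
    · exact hk.trans h
  calc ∑ k ∈ univ.filter (fun k : Fin n => k < i), w k + w i
      = ∑ k ∈ insert i (univ.filter (fun k : Fin n => k < i)), w k := by
        rw [Finset.sum_insert hni, add_comm]
    _ ≤ _ := Finset.sum_le_sum_of_subset hsub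

lemma wrapStart_add_le {n : ℕ} (w : Fin n → ℕ) (i : Fin n) :
    wrapStart w i + w i ≤ ∑ j, w j := by
  unfold wrapStart
  have hni : i ∉ univ.filter (fun k : Fin n => k < i) := by simp
  calc ∑ k ∈ univ.filter (fun k : Fin n => k < i), w k + w i
      = ∑ k ∈ insert i (univ.filter (fun k : Fin n => k < i)), w k := by
        rw [Finset.sum_insert hni, add_comm]
    _ ≤ _ := Finset.sum_le_sum_of_subset (Finset.subset_univ _)

/-- The wrap-around procedure on an interval of length `Δ` with demands `w i ≤ Δ`
summing to at most `2Δ`: each job occupies a union of at most two disjoint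
subintervals of total length `w i`; at every point at most `⌈(Σ w)/Δ⌉` jobs run;
and no job runs simultaneously with itself. -/
theorem stmt19 (n Δ : ℕ) (hΔ : 0 < Δ) (w : Fin n → ℕ)
    (hw : ∀ i, w i ≤ Δ) (hsum : ∑ i, w i ≤ 2 * Δ) :
    (∀ i : Fin n, ∃ s₁ l₁ s₂ l₂ : ℕ,
      l₁ + l₂ = w i ∧ s₁ + l₁ ≤ Δ ∧ s₂ + l₂ ≤ Δ ∧
      Disjoint (Finset.Ico s₁ (s₁ + l₁)) (Finset.Ico s₂ (s₂ + l₂)) ∧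
      (Finset.range Δ).filter (fun t => wrapCovers w Δ i t)
        = Finset.Ico s₁ (s₁ + l₁) ∪ Finset.Ico s₂ (s₂ + l₂)) ∧
    (∀ t < Δ, (univ.filter fun i : Fin n => wrapCovers w Δ i t).card
        ≤ (∑ i, w i + Δ - 1) / Δ) ∧
    (∀ i : Fin n, ∀ u < w i, ∀ v < w i,
      (wrapStart w i + u) % Δ = (wrapStart w i + v) % Δ → u = v) := by
  refine ⟨?_, ?_, ?_⟩
  · -- Part 1: two subintervals
    intro i
    have hwi := hw i
    set s := wrapStart w i % Δ with hs
    have hsΔ : s < Δ := Nat.mod_lt _ hΔ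
    have hkey : ∀ t, wrapCovers w Δ i t ↔ ∃ u, u < w i ∧ (s + u) % Δ = t := by
      intro t
      unfold wrapCovers
      constructor
      · rintro ⟨u, hu, ht⟩
        exact ⟨u, hu, by rw [← ht, hs, Nat.mod_add_mod]⟩
      · rintro ⟨u, hu, ht⟩
        exact ⟨u, hu, by rw [← ht, hs, Nat.mod_add_mod]⟩
    by_cases hcase : s + w i ≤ Δ
    · refine ⟨s, w i, 0, 0, by omega, hcase, by omega, by simp, ?_⟩
      ext t
      simp only [mem_filter, mem_range, mem_union, mem_Ico, hkey]
      constructor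
      · rintro ⟨htΔ, u, hu, hut⟩
        rw [Nat.mod_eq_of_lt (by omega)] at hut
        left; omega
      · rintro (⟨h1, h2⟩ | h)
        · exact ⟨by omega, t - s, by omega, by rw [Nat.mod_eq_of_lt (by omega)]; omega⟩
        · omega
    · refine ⟨s, Δ - s, 0, w i - (Δ - s), by omega, by omega, by omega, ?_, ?_⟩
      · rw [Finset.disjoint_left]
        intro t ht ht'
        simp only [mem_Ico] at ht ht'
        omega
      · ext t
        simp only [mem_filter, mem_range, mem_union, mem_Ico, hkey]
        constructor
        · rintro ⟨htΔ, u, hu, hut⟩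
          by_cases h2 : s + u < Δ
          · rw [Nat.mod_eq_of_lt h2] at hut; left; omega
          · have hmod : (s + u) % Δ = s + u - Δ := by
              rw [Nat.mod_eq_sub_mod (by omega), Nat.mod_eq_of_lt (by omega)]
            rw [hmod] at hut
            right; omega
        · rintro (⟨h1, h2⟩ | ⟨_, h2⟩)
          · exact ⟨by omega, t - s, by omega, by rw [Nat.mod_eq_of_lt (by omega)]; omega⟩
          · refine ⟨by omega, t + Δ - s, by omega, ?_⟩
            have he : s + (t + Δ - s) = t + Δ := by omega
            rw [he, Nat.add_mod_right, Nat.mod_eq_of_lt (by omega)]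
  · -- Part 2: congestion bound
    intro t ht
    classical
    set S := ∑ i, w i with hSdef
    set f : Fin n → ℕ := fun i =>
      if h : ∃ u, u < w i ∧ (wrapStart w i + u) % Δ = t then
        (wrapStart w i + Nat.find h) / Δ
      else 0 with hf
    have key : ∀ i : Fin n, wrapCovers w Δ i t →
        wrapStart w i ≤ f i * Δ + t ∧ f i * Δ + t < wrapStart w i + w i := by
      intro i hi
      have h : ∃ u, u < w i ∧ (wrapStart w i + u) % Δ = t := hi
      rw [hf]
      simp only [dif_pos h]
      obtain ⟨hu, hmod⟩ := Nat.find_spec h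
      set p := wrapStart w i + Nat.find h with hp
      have hdm : p / Δ * Δ + t = p := by
        rw [← hmod]; exact Nat.div_add_mod' p Δ
      omega
    refine le_trans (Finset.card_le_card_of_injOn f ?_ ?_) (le_of_eq (Finset.card_range _))
    · intro i hi
      simp only [Finset.mem_coe, mem_filter, mem_univ, true_and] at hi
      obtain ⟨h1, h2⟩ := key i hi
      have hp := wrapStart_add_le w i
      rw [← hSdef] at hp
      simp only [Finset.mem_coe, mem_range]
      have hK : S ≤ (S + Δ - 1) / Δ * Δ := by
        have h3 := Nat.div_add_mod' (S + Δ - 1) Δ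
        have h4 := Nat.mod_lt (S + Δ - 1) hΔ
        omega
      by_contra hcon
      push_neg at hcon
      have := Nat.mul_le_mul_right Δ hcon
      omega
    · intro i hi j hj hij
      simp only [Finset.coe_filter, Set.mem_setOf_eq, mem_univ, true_and] at hi hj
      obtain ⟨hi1, hi2⟩ := key i hi
      obtain ⟨hj1, hj2⟩ := key j hj
      rw [hij] at hi1 hi2
      by_contra hne
      rcases lt_or_gt_of_ne hne with h | h
      · have := wrapStart_mono w h; omega
      · have := wrapStart_mono w h; omega
  · -- Part 3: no self-overlap
    intro i u hu v hv h
    have hwi := hw i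
    have h1 : u ≡ v [MOD Δ] := Nat.ModEq.add_left_cancel' (wrapStart w i) h
    have h2 : u % Δ = u := Nat.mod_eq_of_lt (by omega)
    have h3 : v % Δ = v := Nat.mod_eq_of_lt (by omega)
    unfold Nat.ModEq at h1
    omega
end
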